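/- Let $m$ be a bounded sequence of integers with $2 \leq m_k \leq \lambda$, $M_0=1$, $M_{k+1}=m_kM_k$, and $T(M_k)=\sum_{n=0}^{M_k-1}v(n)$ where $v$ is the variation function. If $A(k) := T(M_k)/M_k$, then $A(k) \geq A(k-1) + 2/\lambda^2$ for all $k \geq 2$, and consequently $T(M_k) \geq 2kM_k/\lambda^2$ for all $k$. -/

import Mathlib

open MeasureTheory Finset
open scoped ENNReal NNReal

noncomputable section

/-- Generalized number system: `M 0 = 1`, `M (k+1) = m k * M k`. -/
def Mgen (m : ℕ → ℕ) : ℕ → ℕ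
  | 0 => 1
  | k + 1 => m k * Mgen m k

/-- `j`-th digit of `n` in the generalized number system based on `m`. -/
def digit (m : ℕ → ℕ) (n j : ℕ) : ℕ := (n / Mgen m j) % m j

/-- `δ_j(n) = sign (n_j)`. -/
def del (m : ℕ → ℕ) (n j : ℕ) : ℕ := if digit m n j ≠ 0 then 1 else 0

/-- Variation function `v(n) = ∑_{j=1}^∞ |δ_{j+1} - δ_j| + δ_0`. -/
def vvar (m : ℕ → ℕ) (n : ℕ) : ℕ :=
  (∑' j : ℕ, if del m n (j + 2) ≠ del m n (j + 1) then 1 else 0) + del m n 0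

/-- The Vilenkin group: complete direct product of the cyclic groups `ZMod (m k)`. -/
abbrev Gm (m : ℕ → ℕ) := ∀ k : ℕ, ZMod (m k)

instance (m : ℕ → ℕ) (k : ℕ) : MeasurableSpace (ZMod (m k)) := ⊤

/-- Generalized Rademacher functions `r_k(x) = exp(2π i x_k / m_k)`. -/
def rad (m : ℕ → ℕ) (k : ℕ) (x : Gm m) : ℂ :=
  Complex.exp (2 * Real.pi * Complex.I * ((x k).val : ℂ) / (m k : ℂ))

/-- Vilenkin functions `ψ_n = ∏_k r_k^{n_k}` (finite product: digits vanish for `k > n`). -/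
def psi (m : ℕ → ℕ) (n : ℕ) (x : Gm m) : ℂ :=
  ∏ k ∈ Finset.range (n + 1), rad m k x ^ digit m n k

/-- Vilenkin-Dirichlet kernels `D_n = ∑_{k<n} ψ_k`. -/
def Dker (m : ℕ → ℕ) (n : ℕ) (x : Gm m) : ℂ :=
  ∑ k ∈ Finset.range n, psi m k x

/-- `I_N`: the subgroup of elements whose first `N` coordinates vanish. -/
def Icyl (m : ℕ → ℕ) (N : ℕ) : Set (Gm m) := {x | ∀ i < N, x i = 0}

set_option linter.unusedSectionVars false

section Aux
variable {m : ℕ → ℕ}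

lemma Mgen_succ (k : ℕ) : Mgen m (k + 1) = m k * Mgen m k := rfl

lemma Mgen_dvd' (j d : ℕ) : Mgen m j ∣ Mgen m (j + d) := by
  induction d with
  | zero => exact dvd_rfl
  | succ d ih => exact Dvd.dvd.mul_left ih (m (j + d))

lemma Mgen_dvd {j k : ℕ} (h : j ≤ k) : Mgen m j ∣ Mgen m k := by
  obtain ⟨d, rfl⟩ := Nat.exists_eq_add_of_le h
  exact Mgen_dvd' j d

variable (hm : ∀ k, 2 ≤ m k)
include hm

lemma Mgen_pos (k : ℕ) : 0 < Mgen m k := by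
  induction k with
  | zero => simp [Mgen]
  | succ k ih => rw [Mgen_succ]; exact Nat.mul_pos (by linarith [hm k]) ih

lemma Mgen_mono {j k : ℕ} (h : j ≤ k) : Mgen m j ≤ Mgen m k :=
  Nat.le_of_dvd (Mgen_pos hm k) (Mgen_dvd h)

lemma digit_zero_of_ge {n N j : ℕ} (hn : n < Mgen m N) (hj : N ≤ j) :
    digit m n j = 0 := by
  have : n < Mgen m j := lt_of_lt_of_le hn (Mgen_mono hm hj)
  simp [digit, Nat.div_eq_of_lt this]

lemma digit_low {j K : ℕ} (hj : j < K) (a r : ℕ) :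
    digit m (a * Mgen m K + r) j = digit m r j := by
  have h1 : Mgen m (j + 1) ∣ Mgen m K := Mgen_dvd hj
  obtain ⟨c, hc⟩ := h1
  have hMj : 0 < Mgen m j := Mgen_pos hm j
  have : a * Mgen m K + r = Mgen m j * (m j * (a * c)) + r := by
    rw [hc, Mgen_succ]; ring
  rw [digit, this, Nat.mul_add_div hMj, Nat.mul_add_mod, digit]

end Aux

section Aux2
variable {m : ℕ → ℕ}

variable (hm : ∀ k, 2 ≤ m k)
include hm

lemma digit_mid {K a r : ℕ} (ha : a < m K) (hr : r < Mgen m K) :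
    digit m (a * Mgen m K + r) K = a := by
  have hM : 0 < Mgen m K := Mgen_pos hm K
  rw [digit, show a * Mgen m K + r = Mgen m K * a + r by ring, Nat.mul_add_div hM,
    Nat.div_eq_of_lt hr, Nat.add_zero, Nat.mod_eq_of_lt ha]

lemma del_zero_of_ge {n N j : ℕ} (hn : n < Mgen m N) (hj : N ≤ j) : del m n j = 0 := by
  simp [del, digit_zero_of_ge hm hn hj]

lemma vvar_eq {n N : ℕ} (hn : n < Mgen m N) :
    vvar m n = (∑ j ∈ Finset.range N, if del m n (j + 2) ≠ del m n (j + 1) then 1 else 0)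
      + del m n 0 := by
  rw [vvar, tsum_eq_sum (s := Finset.range N)]
  intro j hj
  have hj' : N ≤ j := by simpa using hj
  rw [del_zero_of_ge hm hn (by omega), del_zero_of_ge hm hn (by omega)]
  simp

end Aux2

lemma sum_range_mul' {M : Type*} [AddCommMonoid M] (f : ℕ → M) (a b : ℕ) :
    ∑ n ∈ Finset.range (a * b), f n
      = ∑ i ∈ Finset.range a, ∑ j ∈ Finset.range b, f (i * b + j) := by
  induction a with
  | zero => simp
  | succ a ih =>
    rw [Finset.sum_range_succ, ← ih, Nat.succ_mul, Finset.sum_range_add]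

section Main
variable {m : ℕ → ℕ} (hm : ∀ k, 2 ≤ m k)
include hm

lemma mixed_lt {K a r : ℕ} (ha : a < m K) (hr : r < Mgen m K) :
    a * Mgen m K + r < Mgen m (K + 1) := by
  rw [Mgen_succ]
  have h1 : a * Mgen m K + r < (a + 1) * Mgen m K := by nlinarith
  exact lt_of_lt_of_le h1 (Nat.mul_le_mul_right _ ha)

lemma vvar_one {a r : ℕ} (ha : a < m 1) (ha0 : a ≠ 0) (hr : r < Mgen m 1) :
    vvar m (a * Mgen m 1 + r) = vvar m r + 1 := by
  have hn : a * Mgen m 1 + r < Mgen m 2 := mixed_lt hm ha hr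
  have hr2 : r < Mgen m 2 := lt_of_lt_of_le hr (Mgen_mono hm one_le_two)
  rw [vvar_eq hm hn, vvar_eq hm hr2]
  have d0 : del m (a * Mgen m 1 + r) 0 = del m r 0 := by
    simp [del, digit_low (m := m) hm (j := 0) (K := 1) Nat.zero_lt_one a r]
  have dn1 : del m (a * Mgen m 1 + r) 1 = 1 := by
    simp [del, digit_mid hm ha hr, ha0]
  have dn2 : del m (a * Mgen m 1 + r) 2 = 0 := del_zero_of_ge hm hn le_rfl
  have dn3 : del m (a * Mgen m 1 + r) 3 = 0 := del_zero_of_ge hm hn (by norm_num)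
  have dr1 : del m r 1 = 0 := del_zero_of_ge hm hr le_rfl
  have dr2 : del m r 2 = 0 := del_zero_of_ge hm hr (by norm_num)
  have dr3 : del m r 3 = 0 := del_zero_of_ge hm hr (by norm_num)
  rw [Finset.sum_range_succ, Finset.sum_range_succ, Finset.sum_range_zero,
    Finset.sum_range_succ, Finset.sum_range_succ, Finset.sum_range_zero]
  simp only [dn1, dn2, dn3, dr1, dr2, dr3, d0]
  norm_num
  omega

lemma vvar_high (L : ℕ) {a r : ℕ} (ha : a < m (L + 2)) (ha0 : a ≠ 0)
    (hr : r < Mgen m (L + 2)) :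
    vvar m (a * Mgen m (L + 2) + r) + 2 * del m r (L + 1) = vvar m r + 2 := by
  set n := a * Mgen m (L + 2) + r with hn_def
  have hn : n < Mgen m (L + 3) := mixed_lt hm ha hr
  have hr3 : r < Mgen m (L + 3) := lt_of_lt_of_le hr (Mgen_mono hm (by omega))
  rw [vvar_eq hm hn, vvar_eq hm hr3]
  have d_low : ∀ j < L + 2, del m n j = del m r j := fun j hj => by
    simp [del, hn_def, digit_low hm hj a r]
  have dnK : del m n (L + 2) = 1 := by
    simp [del, hn_def, digit_mid hm ha hr, ha0]
  have dn3 : del m n (L + 3) = 0 := del_zero_of_ge hm hn le_rfl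
  have dn4 : del m n (L + 4) = 0 := del_zero_of_ge hm hn (by omega)
  have drK : del m r (L + 2) = 0 := del_zero_of_ge hm hr le_rfl
  have dr3 : del m r (L + 3) = 0 := del_zero_of_ge hm hr (by omega)
  have dr4 : del m r (L + 4) = 0 := del_zero_of_ge hm hr (by omega)
  rw [show L + 3 = (L + 2) + 1 by rfl, Finset.sum_range_succ, Finset.sum_range_succ,
    Finset.sum_range_succ, Finset.sum_range_succ, Finset.sum_range_succ,
    Finset.sum_range_succ]
  have hsum_eq : ∀ j ∈ Finset.range L,
      (if del m n (j + 2) ≠ del m n (j + 1) then 1 else 0)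
        = (if del m r (j + 2) ≠ del m r (j + 1) then 1 else 0) := fun j hj => by
    have hj' : j < L := Finset.mem_range.mp hj
    rw [d_low (j + 2) (by omega), d_low (j + 1) (by omega)]
  rw [Finset.sum_congr rfl hsum_eq, d_low 0 (by omega), d_low (L + 1) (by omega)]
  have hδ : del m r (L + 1) = 0 ∨ del m r (L + 1) = 1 := by
    rw [del]; split <;> simp
  rcases hδ with h | h <;>
    · simp only [h, dnK, dn3, dn4, drK, dr3, dr4]
      norm_num
      try omega

lemma sum_del (L : ℕ) :
    (∑ j ∈ Finset.range (Mgen m (L + 2)), del m j (L + 1)) + Mgen m (L + 1)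
      = Mgen m (L + 2) := by
  have hM2 : Mgen m (L + 2) = m (L + 1) * Mgen m (L + 1) := rfl
  rw [hM2, sum_range_mul']
  have key : ∀ i ∈ Finset.range (m (L + 1)),
      (∑ t ∈ Finset.range (Mgen m (L + 1)), del m (i * Mgen m (L + 1) + t) (L + 1))
        + (if i = 0 then Mgen m (L + 1) else 0) = Mgen m (L + 1) := by
    intro i hi
    have hi' := Finset.mem_range.mp hi
    by_cases h0 : i = 0
    · have hz : ∀ t ∈ Finset.range (Mgen m (L + 1)),
          del m (i * Mgen m (L + 1) + t) (L + 1) = 0 := by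
        intro t ht
        have ht' := Finset.mem_range.mp ht
        rw [h0, Nat.zero_mul, Nat.zero_add]
        exact del_zero_of_ge hm ht' le_rfl
      rw [Finset.sum_congr rfl hz]
      simp [h0]
    · have ho : ∀ t ∈ Finset.range (Mgen m (L + 1)),
          del m (i * Mgen m (L + 1) + t) (L + 1) = 1 := by
        intro t ht
        have ht' := Finset.mem_range.mp ht
        simp [del, digit_mid hm hi' ht', h0]
      rw [Finset.sum_congr rfl ho]
      simp [h0]
  have h2 := Finset.sum_congr rfl key
  rw [Finset.sum_add_distrib, Finset.sum_ite_eq' (Finset.range (m (L + 1))) 0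
    (fun _ => Mgen m (L + 1))] at h2
  have h0mem : (0 : ℕ) ∈ Finset.range (m (L + 1)) := by
    simp; linarith [hm (L + 1)]
  rw [if_pos h0mem, Finset.sum_const, Finset.card_range, smul_eq_mul] at h2
  omega

lemma T_rec_two :
    (∑ n ∈ Finset.range (Mgen m 2), vvar m n) + Mgen m 1
      = m 1 * ((∑ n ∈ Finset.range (Mgen m 1), vvar m n) + Mgen m 1) := by
  have hM2 : Mgen m 2 = m 1 * Mgen m 1 := rfl
  rw [hM2, sum_range_mul']
  have key : ∀ i ∈ Finset.range (m 1),
      (∑ j ∈ Finset.range (Mgen m 1), vvar m (i * Mgen m 1 + j))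
        + (if i = 0 then Mgen m 1 else 0)
      = (∑ n ∈ Finset.range (Mgen m 1), vvar m n) + Mgen m 1 := by
    intro i hi
    have hi' := Finset.mem_range.mp hi
    by_cases h0 : i = 0
    · simp [h0]
    · have ho : ∀ j ∈ Finset.range (Mgen m 1),
          vvar m (i * Mgen m 1 + j) = vvar m j + 1 := by
        intro j hj
        exact vvar_one hm hi' h0 (Finset.mem_range.mp hj)
      rw [Finset.sum_congr rfl ho, Finset.sum_add_distrib, Finset.sum_const,
        Finset.card_range, smul_eq_mul, mul_one]
      simp [h0]
  have h2 := Finset.sum_congr rfl key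
  rw [Finset.sum_add_distrib, Finset.sum_ite_eq' (Finset.range (m 1)) 0
    (fun _ => Mgen m 1), Finset.sum_const, Finset.card_range, smul_eq_mul] at h2
  have h0mem : (0 : ℕ) ∈ Finset.range (m 1) := by simp; linarith [hm 1]
  rw [if_pos h0mem] at h2
  omega

lemma T_rec_high (L : ℕ) :
    (∑ n ∈ Finset.range (Mgen m (L + 3)), vvar m n) + 2 * Mgen m (L + 1)
      = m (L + 2) * ((∑ n ∈ Finset.range (Mgen m (L + 2)), vvar m n)
          + 2 * Mgen m (L + 1)) := by
  have hM3 : Mgen m (L + 3) = m (L + 2) * Mgen m (L + 2) := rfl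
  rw [hM3, sum_range_mul']
  have key : ∀ i ∈ Finset.range (m (L + 2)),
      (∑ j ∈ Finset.range (Mgen m (L + 2)), vvar m (i * Mgen m (L + 2) + j))
        + (if i = 0 then 2 * Mgen m (L + 1) else 0)
      = (∑ n ∈ Finset.range (Mgen m (L + 2)), vvar m n) + 2 * Mgen m (L + 1) := by
    intro i hi
    have hi' := Finset.mem_range.mp hi
    by_cases h0 : i = 0
    · simp [h0]
    · have ho : ∀ j ∈ Finset.range (Mgen m (L + 2)),
          vvar m (i * Mgen m (L + 2) + j) + 2 * del m j (L + 1) = vvar m j + 2 := by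
        intro j hj
        exact vvar_high hm L hi' h0 (Finset.mem_range.mp hj)
      have hsum := Finset.sum_congr rfl ho
      rw [Finset.sum_add_distrib, Finset.sum_add_distrib, ← Finset.mul_sum,
        Finset.sum_const, Finset.card_range, smul_eq_mul] at hsum
      have hdel := sum_del hm L
      rw [if_neg h0]
      omega
  have h2 := Finset.sum_congr rfl key
  rw [Finset.sum_add_distrib, Finset.sum_ite_eq' (Finset.range (m (L + 2))) 0
    (fun _ => 2 * Mgen m (L + 1)), Finset.sum_const, Finset.card_range,
    smul_eq_mul] at h2
  have h0mem : (0 : ℕ) ∈ Finset.range (m (L + 2)) := by simp; linarith [hm (L + 2)]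
  rw [if_pos h0mem] at h2
  omega

end Main

section Extra
variable {m : ℕ → ℕ} (hm : ∀ k, 2 ≤ m k)
include hm

lemma T_one_lb : Mgen m 1 ≤ (∑ n ∈ Finset.range (Mgen m 1), vvar m n) + 1 := by
  have h1 : ∀ n ∈ Finset.range (Mgen m 1),
      1 ≤ vvar m n + (if n = 0 then 1 else 0) := by
    intro n hn
    by_cases h0 : n = 0
    · simp [h0]
    · have hn' : n < Mgen m 1 := Finset.mem_range.mp hn
      have hM1 : Mgen m 1 = m 0 := by simp [Mgen]
      have hd : del m n 0 = 1 := by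
        have : digit m n 0 = n := by
          simp [digit, Mgen, Nat.mod_eq_of_lt (hM1 ▸ hn')]
        simp [del, this, h0]
      have : del m n 0 ≤ vvar m n := Nat.le_add_left _ _
      omega
  calc Mgen m 1 = ∑ _n ∈ Finset.range (Mgen m 1), 1 := by simp
    _ ≤ ∑ n ∈ Finset.range (Mgen m 1), (vvar m n + (if n = 0 then 1 else 0)) :=
        Finset.sum_le_sum h1
    _ = (∑ n ∈ Finset.range (Mgen m 1), vvar m n) + 1 := by
        rw [Finset.sum_add_distrib, Finset.sum_ite_eq' (Finset.range (Mgen m 1)) 0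
          (fun _ => 1), if_pos (Finset.mem_range.mpr (Mgen_pos hm 1))]

end Extra

/-- with `T(M_k) = ∑_{n<M_k} v(n)` and `A(k) = T(M_k)/M_k`, one has
`A(k) ≥ A(k-1) + 2/λ²` for all `k ≥ 2`, and consequently `T(M_k) ≥ 2 k M_k / λ²`
for all `k`. -/
theorem vvar_sum_growth (m : ℕ → ℕ) (lam : ℕ) (hm : ∀ k, 2 ≤ m k ∧ m k ≤ lam)
    (T A : ℕ → ℝ)
    (hT : ∀ k, T k = ∑ n ∈ Finset.range (Mgen m k), (vvar m n : ℝ))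
    (hA : ∀ k, A k = T k / (Mgen m k : ℝ)) :
    (∀ k, 2 ≤ k → A (k - 1) + 2 / (lam : ℝ) ^ 2 ≤ A k) ∧
      ∀ k : ℕ, 2 * (k : ℝ) * (Mgen m k : ℝ) / (lam : ℝ) ^ 2 ≤ T k := by
  have hm2 : ∀ k, 2 ≤ m k := fun k => (hm k).1
  have hml : ∀ k, m k ≤ lam := fun k => (hm k).2
  have hlam : 2 ≤ lam := le_trans (hm 0).1 (hm 0).2
  have hlamR : (2 : ℝ) ≤ (lam : ℝ) := by exact_mod_cast hlam
  have hlam2 : (0 : ℝ) < (lam : ℝ) ^ 2 := by positivity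
  have hMpos : ∀ k, (0 : ℝ) < (Mgen m k : ℝ) := fun k => by
    exact_mod_cast Mgen_pos hm2 k
  have hmR : ∀ k, (2 : ℝ) ≤ (m k : ℝ) := fun k => by exact_mod_cast hm2 k
  have hmlR : ∀ k, (m k : ℝ) ≤ (lam : ℝ) := fun k => by exact_mod_cast hml k
  have hTcast : ∀ k, T k = ((∑ n ∈ Finset.range (Mgen m k), vvar m n : ℕ) : ℝ) := by
    intro k; rw [hT k]; push_cast; ring
  -- Part 1 (shifted form)
  have part1' : ∀ K : ℕ, A (K + 1) + 2 / (lam : ℝ) ^ 2 ≤ A (K + 2) := by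
    intro K
    cases K with
    | zero =>
      have hid : T 2 + (Mgen m 1 : ℝ) = (m 1 : ℝ) * (T 1 + (Mgen m 1 : ℝ)) := by
        rw [hTcast 2, hTcast 1]
        exact_mod_cast congrArg (fun x : ℕ => (x : ℝ)) (T_rec_two hm2)
      have hM2 : (Mgen m 2 : ℝ) = (m 1 : ℝ) * (Mgen m 1 : ℝ) := by
        rw [Mgen_succ]; push_cast; ring
      have hAeq : A 2 = A 1 + ((m 1 : ℝ) - 1) / (m 1 : ℝ) := by
        rw [hA 2, hA 1, hM2]
        have h1 := hMpos 1
        have h2 : (m 1 : ℝ) ≠ 0 := by linarith [hmR 1]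
        field_simp
        nlinarith [hid]
      rw [hAeq]
      have hstep : 2 / (lam : ℝ) ^ 2 ≤ ((m 1 : ℝ) - 1) / (m 1 : ℝ) := by
        rw [div_le_div_iff₀ hlam2 (by linarith [hmR 1])]
        nlinarith [hmR 1, hlamR, mul_le_mul_of_nonneg_left
          (show (4 : ℝ) ≤ (lam : ℝ) ^ 2 by nlinarith)
          (show (0 : ℝ) ≤ (m 1 : ℝ) - 1 by linarith [hmR 1])]
      linarith
    | succ L =>
      have hid : T (L + 3) + 2 * (Mgen m (L + 1) : ℝ)
          = (m (L + 2) : ℝ) * (T (L + 2) + 2 * (Mgen m (L + 1) : ℝ)) := by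
        rw [hTcast (L + 3), hTcast (L + 2)]
        exact_mod_cast congrArg (fun x : ℕ => (x : ℝ)) (T_rec_high hm2 L)
      have hM3 : (Mgen m (L + 3) : ℝ) = (m (L + 2) : ℝ) * (Mgen m (L + 2) : ℝ) := by
        rw [Mgen_succ]; push_cast; ring
      have hM2 : (Mgen m (L + 2) : ℝ) = (m (L + 1) : ℝ) * (Mgen m (L + 1) : ℝ) := by
        rw [Mgen_succ]; push_cast; ring
      have hμ := hMpos (L + 1)
      have hm1 : (2 : ℝ) ≤ (m (L + 1) : ℝ) := hmR (L + 1)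
      have hm2' : (2 : ℝ) ≤ (m (L + 2) : ℝ) := hmR (L + 2)
      have hAeq : A (L + 3) = A (L + 2)
          + 2 * ((m (L + 2) : ℝ) - 1) / ((m (L + 2) : ℝ) * (m (L + 1) : ℝ)) := by
        rw [hA (L + 3), hA (L + 2), hM3, hM2]
        field_simp
        linear_combination hid
      rw [show L + 1 + 1 = L + 2 from rfl, show L + 1 + 2 = L + 3 from rfl, hAeq]
      have hstep : 2 / (lam : ℝ) ^ 2
          ≤ 2 * ((m (L + 2) : ℝ) - 1) / ((m (L + 2) : ℝ) * (m (L + 1) : ℝ)) := by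
        have hP : (m (L + 2) : ℝ) * (m (L + 1) : ℝ) ≤ (lam : ℝ) ^ 2 := by
          nlinarith [hmlR (L + 1), hmlR (L + 2), hm1, hm2']
        rw [div_le_div_iff₀ hlam2 (by nlinarith)]
        nlinarith [hP, hm2']
      linarith
  have part1 : ∀ k, 2 ≤ k → A (k - 1) + 2 / (lam : ℝ) ^ 2 ≤ A k := by
    intro k hk
    obtain ⟨K, rfl⟩ : ∃ K, k = K + 2 := ⟨k - 2, by omega⟩
    simpa using part1' K
  refine ⟨part1, ?_⟩
  -- Part 2
  have hA1 : 2 * (1 : ℝ) / (lam : ℝ) ^ 2 ≤ A 1 := by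
    have hub : (Mgen m 1 : ℝ) - 1 ≤ T 1 := by
      rw [hTcast 1]
      have := T_one_lb hm2
      have : ((Mgen m 1 : ℕ) : ℝ) ≤ ((∑ n ∈ Finset.range (Mgen m 1), vvar m n : ℕ) : ℝ) + 1 := by
        exact_mod_cast this
      linarith
    rw [hA 1]
    have hM1 := hMpos 1
    have hM1' : (2 : ℝ) ≤ (Mgen m 1 : ℝ) := by
      have : 2 ≤ Mgen m 1 := by
        have h := hm2 0
        have : Mgen m 1 = m 0 := by simp [Mgen]
        omega
      exact_mod_cast this
    have h1 : 2 * (1 : ℝ) / (lam : ℝ) ^ 2 ≤ 1 / 2 := by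
      rw [div_le_div_iff₀ hlam2 (by norm_num)]
      nlinarith
    have h2 : (1 : ℝ) / 2 ≤ ((Mgen m 1 : ℝ) - 1) / (Mgen m 1 : ℝ) := by
      rw [div_le_div_iff₀ (by norm_num) hM1]
      linarith
    have h3 : ((Mgen m 1 : ℝ) - 1) / (Mgen m 1 : ℝ) ≤ T 1 / (Mgen m 1 : ℝ) := by
      gcongr
    linarith
  have main : ∀ k : ℕ, 1 ≤ k → 2 * (k : ℝ) / (lam : ℝ) ^ 2 ≤ A k := by
    intro k hk
    induction k, hk using Nat.le_induction with
    | base => simpa using hA1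
    | succ n hn ih =>
      obtain ⟨K, rfl⟩ : ∃ K, n = K + 1 := ⟨n - 1, by omega⟩
      have hstep := part1' K
      have heq : 2 * ((K + 1 + 1 : ℕ) : ℝ) / (lam : ℝ) ^ 2
          = 2 * ((K + 1 : ℕ) : ℝ) / (lam : ℝ) ^ 2 + 2 / (lam : ℝ) ^ 2 := by
        push_cast; ring
      rw [heq]
      linarith
  intro k
  rcases Nat.eq_zero_or_pos k with rfl | hk
  · simp only [Nat.cast_zero, mul_zero, zero_mul, zero_div]
    rw [hT 0]
    positivity
  · have h := main k hk
    rw [hA k] at h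
    have hMk := hMpos k
    calc 2 * (k : ℝ) * (Mgen m k : ℝ) / (lam : ℝ) ^ 2
        = (2 * (k : ℝ) / (lam : ℝ) ^ 2) * (Mgen m k : ℝ) := by ring
      _ ≤ (T k / (Mgen m k : ℝ)) * (Mgen m k : ℝ) :=
          mul_le_mul_of_nonneg_right h (le_of_lt hMk)
      _ = T k := div_mul_cancel₀ _ (ne_of_gt hMk)
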